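/- Soft Embedding Lemma: Let (X,τ,E) be a soft topological space, {(X_i,τ_i,E_i)}_{i∈I} a family of soft topological spaces, and {(φ_ψ)_i} a family of soft continuous mappings (φ_ψ)_i : SS(X,E) → SS(X_i,E_i) that soft separates soft points (for any two distinct soft points there is an index j with distinct soft images) and soft separates soft points from soft closed sets (for any soft closed set (C,E) and soft point not in (C,E), there is j with (φ_ψ)_j(x_α,E) not belonging to the soft closure of (φ_ψ)_j(C,E) in X_j). Then the soft diagonal mapping Δ = Δ_i (φ_ψ)_i : SS(X,E) → SS(∏X_i, ∏E_i), where the product carries the soft product topology, is a soft embedding (soft continuous, injective, and a soft homeomorphism onto its image with the subspace topology). -/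

import Mathlib

/-- τ is a soft topology on `X` with parameter set `E`. -/
def IsSoftTopology {X E : Type*} (τ : Set (E → Set X)) : Prop :=
  (fun _ => (∅ : Set X)) ∈ τ ∧
  (fun _ => (Set.univ : Set X)) ∈ τ ∧
  (∀ F G : E → Set X, F ∈ τ → G ∈ τ → (fun e => F e ∩ G e) ∈ τ) ∧
  (∀ 𝒜 : Set (E → Set X), 𝒜 ⊆ τ → (fun e => ⋃ F ∈ 𝒜, F e) ∈ τ)

/-- A soft set is soft closed iff its soft complement is soft open. -/
def IsSoftClosed {X E : Type*} (τ : Set (E → Set X)) (C : E → Set X) : Prop :=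
  (fun e => (C e)ᶜ) ∈ τ

/-- The soft closure: soft intersection of all soft closed soft supersets. -/
def softClosure {X E : Type*} (τ : Set (E → Set X)) (F : E → Set X) : E → Set X :=
  fun e => ⋂ C ∈ {C : E → Set X | IsSoftClosed τ C ∧ ∀ e', F e' ⊆ C e'}, C e

/-- Soft image of a soft set under the soft mapping `φ_ψ`. -/
def softImage {U U' E E' : Type*} (φ : U → U') (ψ : E → E')
    (F : E → Set U) : E' → Set U' :=
  fun e' => ⋃ e ∈ ψ ⁻¹' {e'}, φ '' F e

/-- Soft inverse image of a soft set under the soft mapping `φ_ψ`. -/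
def softPreimage {U U' E E' : Type*} (φ : U → U') (ψ : E → E')
    (G : E' → Set U') : E → Set U :=
  fun e => φ ⁻¹' G (ψ e)

/-- `φ_ψ` is soft continuous: soft inverse images of soft open sets are soft open. -/
def SoftContinuous {U U' E E' : Type*} (τ : Set (E → Set U)) (τ' : Set (E' → Set U'))
    (φ : U → U') (ψ : E → E') : Prop :=
  ∀ G ∈ τ', softPreimage φ ψ G ∈ τ

/-- Soft subspace topology on a subset `Y` of the universe and a subset `P` of
the parameter set: traces of the soft open sets. -/
def subspaceSoftTopology {X' E' : Type*} (τ' : Set (E' → Set X')) (Y : Set X') (P : Set E') :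
    Set (P → Set Y) :=
  {D | ∃ G ∈ τ', D = fun e => Subtype.val ⁻¹' G e.val}

def productSubbase {I : Type*} {Xi : I → Type*} {Ei : I → Type*}
    (τi : ∀ i, Set (Ei i → Set (Xi i))) : Set ((∀ i, Ei i) → Set (∀ i, Xi i)) :=
  {S | ∃ i, ∃ G ∈ τi i, S = fun e => {x : ∀ j, Xi j | x i ∈ G (e i)}}

def generatedSoftTopology {X E : Type*} (S : Set (E → Set X)) : Set (E → Set X) :=
  ⋂₀ {τ | IsSoftTopology τ ∧ S ⊆ τ}

section Aux
variable {X E : Type*}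

lemma generated_isSoftTopology (S : Set (E → Set X)) :
    IsSoftTopology (generatedSoftTopology S) := by
  refine ⟨?_, ?_, ?_, ?_⟩
  · intro τ' hτ'; exact hτ'.1.1
  · intro τ' hτ'; exact hτ'.1.2.1
  · intro F G hF hG τ' hτ'; exact hτ'.1.2.2.1 F G (hF τ' hτ') (hG τ' hτ')
  · intro 𝒜 h𝒜 τ' hτ'; exact hτ'.1.2.2.2 𝒜 (fun F hF => h𝒜 hF τ' hτ')

lemma subset_generated (S : Set (E → Set X)) : S ⊆ generatedSoftTopology S := by
  intro s hs τ' hτ'; exact hτ'.2 hs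

lemma softClosure_isClosed {τ : Set (E → Set X)} (hτ : IsSoftTopology τ)
    (F : E → Set X) : IsSoftClosed τ (softClosure τ F) := by
  set S := { (fun e => (C e)ᶜ) | C ∈ {C : E → Set X | IsSoftClosed τ C ∧ ∀ e', F e' ⊆ C e'} }
    with hS
  have h := hτ.2.2.2 S (by rintro _ ⟨C, hC, rfl⟩; exact hC.1)
  have heq : (fun e => (softClosure τ F e)ᶜ) = (fun e => ⋃ F' ∈ S, F' e) := by
    funext e
    ext x
    simp only [softClosure, hS, Set.mem_compl_iff, Set.mem_iInter, Set.mem_iUnion,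
      Set.mem_setOf_eq]
    constructor
    · intro h
      push_neg at h
      obtain ⟨C, hC, hx⟩ := h
      exact ⟨_, ⟨C, hC, rfl⟩, hx⟩
    · rintro ⟨_, ⟨C, hC, rfl⟩, hx⟩ h
      exact hx (h C hC)
  show (fun e => (softClosure τ F e)ᶜ) ∈ τ
  rw [heq]
  exact h

lemma subset_softClosure {τ : Set (E → Set X)} (F : E → Set X) (e : E) :
    F e ⊆ softClosure τ F e := by
  intro x hx
  simp only [softClosure, Set.mem_iInter]
  intro C hC
  exact hC.2 e hx

end Aux

/-- Soft Embedding Lemma: if a family of soft continuous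
mappings `(φ_ψ)_i` soft separates soft points and soft separates soft points
from soft closed sets, then the soft diagonal mapping `Δ` into the soft
topological product is a soft embedding: its corestriction onto its image, with
the soft subspace topology of the soft product topology, is a soft
homeomorphism (bijective, soft continuous, with soft continuous soft inverse). -/
theorem soft_embedding_lemma {X E : Type*} {I : Type*}
    {Xi : I → Type*} {Ei : I → Type*} [Nonempty X] [Nonempty E]
    (τ : Set (E → Set X)) (τi : ∀ i, Set (Ei i → Set (Xi i)))
    (hτ : IsSoftTopology τ) (hτi : ∀ i, IsSoftTopology (τi i))
    (φ : ∀ i, X → Xi i) (ψ : ∀ i, E → Ei i)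
    (hcont : ∀ i, SoftContinuous τ (τi i) (φ i) (ψ i))
    (hsep : ∀ (x y : X) (α β : E), (x ≠ y ∨ α ≠ β) →
      ∃ j, φ j x ≠ φ j y ∨ ψ j α ≠ ψ j β)
    (hsepc : ∀ C : E → Set X, IsSoftClosed τ C → ∀ (x : X) (α : E), x ∉ C α →
      ∃ j, φ j x ∉ softClosure (τi j) (softImage (φ j) (ψ j) C) (ψ j α)) :
    let τP := generatedSoftTopology (productSubbase τi)
    let Φ : X → ∀ i, Xi i := fun x i => φ i x
    let Ψ : E → ∀ i, Ei i := fun e i => ψ i e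
    let Y : Set (∀ i, Xi i) := Set.range Φ
    let P : Set (∀ i, Ei i) := Set.range Ψ
    let τY := subspaceSoftTopology τP Y P
    let Φc : X → Y := fun x => ⟨Φ x, Set.mem_range_self x⟩
    let Ψc : E → P := fun e => ⟨Ψ e, Set.mem_range_self e⟩
    Function.Bijective Φc ∧ Function.Bijective Ψc ∧
    SoftContinuous τ τY Φc Ψc ∧
    ∀ (Φinv : Y → X) (Ψinv : P → E),
      Function.LeftInverse Φinv Φc → Function.RightInverse Φinv Φc →
      Function.LeftInverse Ψinv Ψc → Function.RightInverse Ψinv Ψc →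
      SoftContinuous τY τ Φinv Ψinv := by
  intro τP Φ Ψ Y P τY Φc Ψc
  have hτP : IsSoftTopology τP := generated_isSoftTopology _
  -- injectivity facts
  have hΦinj : Function.Injective Φ := by
    intro x y hxy
    by_contra hne
    obtain ⟨j, hj⟩ := hsep x y (Classical.arbitrary E) (Classical.arbitrary E) (Or.inl hne)
    rcases hj with h | h
    · exact h (congrFun hxy j)
    · exact h rfl
  have hΨinj : Function.Injective Ψ := by
    intro α β hab
    by_contra hne
    obtain ⟨j, hj⟩ := hsep (Classical.arbitrary X) (Classical.arbitrary X) α β (Or.inr hne)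
    rcases hj with h | h
    · exact h rfl
    · exact h (congrFun hab j)
  refine ⟨⟨fun x y h => hΦinj (congrArg Subtype.val h), ?_⟩,
          ⟨fun α β h => hΨinj (congrArg Subtype.val h), ?_⟩, ?_, ?_⟩
  · rintro ⟨_, x, rfl⟩; exact ⟨x, rfl⟩
  · rintro ⟨_, e, rfl⟩; exact ⟨e, rfl⟩
  · -- soft continuity of Φc,Ψc
    rintro D ⟨G, hG, rfl⟩
    have key : ∀ G ∈ τP, softPreimage Φ Ψ G ∈ τ := by
      intro G hG
      have : G ∈ {G | softPreimage Φ Ψ G ∈ τ} := by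
        apply hG
        refine ⟨⟨?_, ?_, ?_, ?_⟩, ?_⟩
        · exact hτ.1
        · exact hτ.2.1
        · intro F G hF hG
          exact hτ.2.2.1 _ _ hF hG
        · intro 𝒜 h𝒜
          show softPreimage Φ Ψ (fun e => ⋃ F ∈ 𝒜, F e) ∈ τ
          have := hτ.2.2.2 ((softPreimage Φ Ψ) '' 𝒜)
            (by rintro _ ⟨F, hF, rfl⟩; exact h𝒜 hF)
          convert this using 1
          funext e
          ext x
          simp [softPreimage]
        · rintro _ ⟨i, G, hGi, rfl⟩
          show softPreimage Φ Ψ _ ∈ τ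
          have := hcont i G hGi
          convert this using 1
          rfl
      exact this
    have := key G hG
    convert this using 1
    rfl
  · -- inverse continuity
    intro Φinv Ψinv hΦl hΦr hΨl hΨr F hF
    set C : E → Set X := fun e => (F e)ᶜ with hCdef
    have hC : IsSoftClosed τ C := by
      show (fun e => (C e)ᶜ) ∈ τ
      simpa [hCdef, compl_compl] using hF
    -- for each soft point in F choose a separating index
    set T := {p : X × E // p.1 ∈ F p.2} with hT
    have hsep' : ∀ s : T, ∃ j, φ j s.1.1 ∉
        softClosure (τi j) (softImage (φ j) (ψ j) C) (ψ j s.1.2) :=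
      fun s => hsepc C hC s.1.1 s.1.2 (by simp [hCdef, s.2])
    classical
    set jf : T → I := fun s => (hsep' s).choose with hjf
    set mkU : T → ((∀ i, Ei i) → Set (∀ i, Xi i)) := fun s =>
      fun e => {z : ∀ i, Xi i | z (jf s) ∈
        (softClosure (τi (jf s)) (softImage (φ (jf s)) (ψ (jf s)) C) (e (jf s)))ᶜ} with hmkU
    have hmk_mem : ∀ s, mkU s ∈ τP := by
      intro s
      apply subset_generated
      exact ⟨jf s, _, softClosure_isClosed (hτi (jf s)) _, rfl⟩
    set G : (∀ i, Ei i) → Set (∀ i, Xi i) := fun e => ⋃ U ∈ Set.range mkU, U e with hGdef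
    have hG : G ∈ τP := hτP.2.2.2 _ (by rintro _ ⟨s, rfl⟩; exact hmk_mem s)
    refine ⟨G, hG, ?_⟩
    funext p
    ext y
    have hyval : (y : ∀ i, Xi i) = Φ (Φinv y) := (congrArg Subtype.val (hΦr y)).symm
    have hpval : (p : ∀ i, Ei i) = Ψ (Ψinv p) := (congrArg Subtype.val (hΨr p)).symm
    simp only [softPreimage, Set.mem_preimage, hGdef, Set.mem_iUnion]
    constructor
    · intro hmem
      refine ⟨_, ⟨⟨(Φinv y, Ψinv p), hmem⟩, rfl⟩, ?_⟩
      rw [hyval, hpval]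
      exact (hsep' ⟨(Φinv y, Ψinv p), hmem⟩).choose_spec
    · rintro ⟨_, ⟨s, rfl⟩, hy⟩
      by_contra hmem
      have hc : Φinv y ∈ C (Ψinv p) := hmem
      rw [hyval, hpval] at hy
      have himg : φ (jf s) (Φinv y) ∈
          softImage (φ (jf s)) (ψ (jf s)) C (ψ (jf s) (Ψinv p)) := by
        simp only [softImage, Set.mem_iUnion]
        exact ⟨Ψinv p, rfl, Set.mem_image_of_mem _ hc⟩
      exact hy (subset_softClosure _ _ himg)
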